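/- Let Δ ∈ [4/3, 2), ℓ ≥ Δ, n = ⌊ℓ/Δ⌋ - 1, δ₁ = (Δ/2)(1 + {ℓ/Δ}), δ₂ = (Δ/2){ℓ/Δ}. Consider \hat{g}_j(α) = (1-|α|/Δ)_+ for 1 ≤ j ≤ n translated by ξ_j = Δj, plus \hat{g}_{n+1}(α) = (δ₁/Δ)(1-|α|/δ₁)_+ translated by ξ_{n+1} = Δn + δ₁, plus (if δ₂ > 0) \hat{g}_{n+2}(α) = (δ₂/Δ)(1-|α|/δ₂)_+ translated by ξ_{n+2} = Δ(n+1) + δ₂. Then ∑_j \hat{g}_j(α - ξ_j) ≤ χ_{[0,ℓ]}(α) for all α ∈ ℝ. -/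

import Mathlib

/-!
Let `r(x) = min (max x 0) Δ`. A triangle of slope `1/Δ` and half-width `d ≤ Δ` supported on
`[b, b + 2d]` is dominated by `(r(α - b) - r(α - b - Δ))/Δ`. All the triangles of the
construction have this shape with `b = Δ(j - 1)`, so their bounds telescope to
`(r(α) - r(α - Δ(n + 2)))/Δ ≤ 1`. Outside `[0, ℓ]` every triangle vanishes, because
`ℓ = Δn + 2δ₁ = Δ(n + 1) + 2δ₂` puts all supports inside `[0, ℓ]`.
-/

open Real Set

/-- The paper's `(d/Δ)(1 - |α - c|/d)_+`: the triangle centred at `c` of half-width `d` and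
slope `1/Δ`. -/
noncomputable def tent (Δ d c α : ℝ) : ℝ := d / Δ * max (1 - |α - c| / d) 0

def ramp (Δ x : ℝ) : ℝ := min (max x 0) Δ

lemma ramp_nonneg {Δ : ℝ} (hΔ : 0 ≤ Δ) (x : ℝ) : 0 ≤ ramp Δ x :=
  le_min (le_max_right _ _) hΔ

lemma ramp_le (Δ x : ℝ) : ramp Δ x ≤ Δ := min_le_right _ _

lemma sum_Icc_ramp_sub (Δ x : ℝ) (m : ℕ) :
    ∑ j ∈ Finset.Icc 1 m,
        (ramp Δ (x - Δ * ((j : ℝ) - 1)) - ramp Δ (x - Δ * ((j : ℝ) - 1) - Δ))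
      = ramp Δ x - ramp Δ (x - Δ * m) := by
  induction m with
  | zero => simp
  | succ m ih =>
    rw [Finset.sum_Icc_succ_top (by omega), ih]
    push_cast
    ring_nf

lemma sum_Icc_ramp_sub_div_le_one {Δ : ℝ} (hΔ : 0 < Δ) (x : ℝ) (m : ℕ) :
    (∑ j ∈ Finset.Icc 1 m,
        (ramp Δ (x - Δ * ((j : ℝ) - 1)) - ramp Δ (x - Δ * ((j : ℝ) - 1) - Δ))) / Δ ≤ 1 := by
  rw [sum_Icc_ramp_sub, div_le_one hΔ]
  linarith [ramp_le Δ x, ramp_nonneg hΔ.le (x - Δ * m)]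

lemma tent_self {Δ : ℝ} (hΔ : Δ ≠ 0) (c α : ℝ) :
    tent Δ Δ c α = max (1 - |α - c| / Δ) 0 := by
  rw [tent, div_self hΔ, one_mul]

lemma tent_eq_max_div {Δ d : ℝ} (hd : 0 ≤ d) (c α : ℝ) :
    tent Δ d c α = max (d - |α - c|) 0 / Δ := by
  rcases hd.eq_or_lt with rfl | hd
  · simp [tent]
  · rw [tent, div_mul_eq_mul_div, mul_max_of_nonneg _ _ hd.le, mul_one_sub,
      mul_div_cancel₀ _ hd.ne', mul_zero]

lemma max_sub_abs_le_ramp_sub {Δ d : ℝ} (hd : 0 ≤ d) (hdΔ : d ≤ Δ) (b α : ℝ) :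
    max (d - |α - (b + d)|) 0 ≤ ramp Δ (α - b) - ramp Δ (α - b - Δ) := by
  unfold ramp
  rcases abs_cases (α - (b + d)) with ⟨h, hs⟩ | ⟨h, hs⟩ <;> rw [h] <;>
    simp only [max_def, min_def] <;> split_ifs <;> linarith

lemma max_sub_abs_eq_zero {d c α : ℝ} (h : α ∉ Icc (c - d) (c + d)) :
    max (d - |α - c|) 0 = 0 := by
  refine max_eq_right (sub_nonpos.mpr ?_)
  rw [mem_Icc, not_and_or, not_le, not_le] at h
  rcases h with h | h
  · linarith [neg_le_abs (α - c)]
  · linarith [le_abs_self (α - c)]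

lemma tent_le_ite_ramp_sub {Δ d b c ℓ : ℝ} (hΔ : 0 < Δ) (hd : 0 ≤ d) (hdΔ : d ≤ Δ)
    (hc : c = b + d) (hb : 0 ≤ b) (hbℓ : b + 2 * d ≤ ℓ) (α : ℝ) :
    tent Δ d c α ≤
      if α ∈ Icc 0 ℓ then (ramp Δ (α - b) - ramp Δ (α - b - Δ)) / Δ else 0 := by
  rw [tent_eq_max_div hd, hc]
  split_ifs with hα
  · exact div_le_div_of_nonneg_right (max_sub_abs_le_ramp_sub hd hdΔ b α) hΔ.le
  · refine le_of_eq ?_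
    rw [max_sub_abs_eq_zero, zero_div]
    exact fun h => hα ⟨by linarith [h.1], by linarith [h.2]⟩

theorem stmt_15_general (Δ ℓ : ℝ) (n : ℕ) (hΔ : Δ ∈ Set.Ico (4/3 : ℝ) 2)
    (hn : (n : ℝ) = (⌊ℓ / Δ⌋ : ℝ) - 1) :
    ∀ α : ℝ,
      (∑ j ∈ Finset.Icc 1 (n + 2),
        (if j = n + 1 then
          ((Δ/2) * (1 + Int.fract (ℓ/Δ)) / Δ)
            * max (1 - |α - (Δ * (n : ℝ) + (Δ/2) * (1 + Int.fract (ℓ/Δ)))|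
                / ((Δ/2) * (1 + Int.fract (ℓ/Δ)))) 0
        else if j = n + 2 then
          ((Δ/2) * Int.fract (ℓ/Δ) / Δ)
            * max (1 - |α - (Δ * ((n : ℝ) + 1) + (Δ/2) * Int.fract (ℓ/Δ))|
                / ((Δ/2) * Int.fract (ℓ/Δ))) 0
        else
          max (1 - |α - Δ * (j : ℝ)| / Δ) 0))
      ≤ (if α ∈ Set.Icc (0:ℝ) ℓ then 1 else 0) := by
  intro α
  have hΔ0 : 0 < Δ := by linarith [hΔ.1]
  set F := Int.fract (ℓ / Δ)
  have hF0 : 0 ≤ F := Int.fract_nonneg _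
  have hF1 : F < 1 := Int.fract_lt_one _
  have hℓ : ℓ = Δ * (n + 1 + F) := by
    rw [hn, sub_add_cancel, Int.floor_add_fract, mul_div_cancel₀ _ hΔ0.ne']
  calc _ ≤ ∑ j ∈ Finset.Icc 1 (n + 2), if α ∈ Icc 0 ℓ then
          (ramp Δ (α - Δ * ((j : ℝ) - 1)) - ramp Δ (α - Δ * ((j : ℝ) - 1) - Δ)) / Δ
        else 0 := by
        refine Finset.sum_le_sum fun j hj => ?_
        have hj1 : (1 : ℝ) ≤ j := by exact_mod_cast (Finset.mem_Icc.mp hj).1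
        have hb : 0 ≤ Δ * ((j : ℝ) - 1) := mul_nonneg hΔ0.le (by linarith)
        obtain rfl | rfl | hjn : j = n + 1 ∨ j = n + 2 ∨ j ≤ n := by
          have := Finset.mem_Icc.mp hj; omega
        · rw [if_pos rfl]
          exact tent_le_ite_ramp_sub hΔ0 (by positivity) (by nlinarith) (by push_cast; ring) hb
            (by rw [hℓ]; push_cast; nlinarith) α
        · rw [if_neg (by omega), if_pos rfl]
          exact tent_le_ite_ramp_sub hΔ0 (by positivity) (by nlinarith) (by push_cast; ring) hb
            (by rw [hℓ]; push_cast; nlinarith) α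
        · rw [if_neg (by omega), if_neg (by omega), ← tent_self hΔ0.ne']
          have hjn' : (j : ℝ) ≤ n := by exact_mod_cast hjn
          exact tent_le_ite_ramp_sub hΔ0 hΔ0.le le_rfl (by ring) hb
            (by rw [hℓ]; nlinarith) α
    _ ≤ _ := by
        rw [Finset.sum_ite_irrel, Finset.sum_const_zero, ← Finset.sum_div]
        split_ifs
        exacts [sum_Icc_ramp_sub_div_le_one hΔ0 α (n + 2), le_rfl]

/-- Minorant construction: for `Δ ∈ [4/3, 2)`, `ℓ ≥ Δ`, `n = ⌊ℓ/Δ⌋ - 1`,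
`δ₁ = (Δ/2)(1 + {ℓ/Δ})`, `δ₂ = (Δ/2){ℓ/Δ}`, the superposition of `n` big triangles,
one medium triangle and one small triangle is bounded above by the indicator of
`[0, ℓ]` on all of `ℝ`. -/
theorem stmt_15 (Δ ℓ : ℝ) (n : ℕ) (hΔ : Δ ∈ Set.Ico (4/3 : ℝ) 2) (hℓ : Δ ≤ ℓ)
    (hn : (n : ℝ) = (⌊ℓ / Δ⌋ : ℝ) - 1) :
    ∀ α : ℝ,
      (∑ j ∈ Finset.Icc 1 (n + 2),
        (if j = n + 1 then
          ((Δ/2) * (1 + Int.fract (ℓ/Δ)) / Δ)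
            * max (1 - |α - (Δ * (n : ℝ) + (Δ/2) * (1 + Int.fract (ℓ/Δ)))|
                / ((Δ/2) * (1 + Int.fract (ℓ/Δ)))) 0
        else if j = n + 2 then
          ((Δ/2) * Int.fract (ℓ/Δ) / Δ)
            * max (1 - |α - (Δ * ((n : ℝ) + 1) + (Δ/2) * Int.fract (ℓ/Δ))|
                / ((Δ/2) * Int.fract (ℓ/Δ))) 0
        else
          max (1 - |α - Δ * (j : ℝ)| / Δ) 0))
      ≤ (if α ∈ Set.Icc (0:ℝ) ℓ then 1 else 0) :=
  stmt_15_general Δ ℓ n hΔ hn
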